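/- For a hyperbolic triangle with angles a_i defined as functions of the edge lengths (l1, l2, l3) by the hyperbolic cosine law, one has ∂a_i/∂l_i = sinh(l_i)/A where A = sin(a_i)·sinh(l_j)·sinh(l_k), and ∂a_i/∂l_j = −(∂a_i/∂l_i)·cos(a_k), for {i,j,k} = {1,2,3}. -/

import Mathlib

/-!
On the open set of side lengths satisfying the triangle inequalities, the hyperbolic law of
cosines gives `a_i = arccos ((cosh l_j cosh l_k - cosh l_i) / (sinh l_j sinh l_k))`, so both
derivatives follow from the chain rule with `arccos' (cos θ) = -1 / sin θ`. For `∂/∂l_j`, the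
derivative of the quotient simplifies, via `cosh² - sinh² = 1` and the law of cosines for `a_k`,
to `sinh l_i cos a_k / (sinh l_j sinh l_k)`.
-/

open Real

open Filter Topology

def IsTriangle (x : Fin 3 → ℝ) : Prop :=
  (∀ i, 0 < x i) ∧ ∀ i j k : Fin 3, i ≠ j → j ≠ k → i ≠ k → x i < x j + x k

theorem isOpen_setOf_isTriangle : IsOpen {x : Fin 3 → ℝ | IsTriangle x} := by
  simp only [IsTriangle, Set.ofPred_and, Set.ofPred_forall]
  refine (isOpen_iInter_of_finite fun i => isOpen_lt continuous_const (continuous_apply i)).inter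
    (isOpen_iInter_of_finite fun i => isOpen_iInter_of_finite fun j =>
      isOpen_iInter_of_finite fun k => isOpen_iInter_of_finite fun _ =>
        isOpen_iInter_of_finite fun _ => isOpen_iInter_of_finite fun _ =>
          isOpen_lt (continuous_apply i) ((continuous_apply j).add (continuous_apply k)))

theorem IsTriangle.eventually_update {l : Fin 3 → ℝ} (hl : IsTriangle l) (m : Fin 3) :
    ∀ᶠ t in 𝓝 (l m), IsTriangle (Function.update l m t) := by
  have hcont : Continuous (Function.update l m) := continuous_const.update m continuous_id
  exact hcont.continuousAt.preimage_mem_nhds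
    (isOpen_setOf_isTriangle.mem_nhds (show Function.update l m (l m) ∈ _ by simpa using hl))

/-- The angle opposite to the side `x` of the hyperbolic triangle with sides `x, y, z`. -/
noncomputable def hypAngle (x y z : ℝ) : ℝ :=
  arccos ((cosh y * cosh z - cosh x) / (sinh y * sinh z))

theorem eq_hypAngle_of_cosh_eq {x y z θ : ℝ} (hy : 0 < y) (hz : 0 < z)
    (hθ : θ ∈ Set.Ioo 0 π) (h : cosh x = cosh y * cosh z - sinh y * sinh z * cos θ) :
    θ = hypAngle x y z := by
  have hyz : sinh y * sinh z ≠ 0 := (mul_pos (sinh_pos_iff.2 hy) (sinh_pos_iff.2 hz)).ne'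
  rw [hypAngle, ← arccos_cos hθ.1.le hθ.2.le]
  congr 1
  field_simp
  linarith

theorem hasDerivAt_arccos_comp_of_eq_cos {f : ℝ → ℝ} {f' x θ : ℝ} (hf : HasDerivAt f f' x)
    (hθ : θ ∈ Set.Ioo 0 π) (hfx : f x = cos θ) :
    HasDerivAt (fun t => arccos (f t)) (-f' / sin θ) x := by
  have hsin : 0 < sin θ := sin_pos_of_pos_of_lt_pi hθ.1 hθ.2
  have hpyth := sin_sq_add_cos_sq θ
  have h := (hasDerivAt_arccos (x := f x) (by rw [hfx]; nlinarith)
    (by rw [hfx]; nlinarith)).comp x hf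
  rw [hfx, ← sin_eq_sqrt_one_sub_cos_sq hθ.1.le hθ.2.le] at h
  exact h.congr_deriv (by ring)

theorem hasDerivAt_hypAngle_left {x y z θ : ℝ} (hy : 0 < y) (hz : 0 < z)
    (hθ : θ ∈ Set.Ioo 0 π) (h : cosh x = cosh y * cosh z - sinh y * sinh z * cos θ) :
    HasDerivAt (fun t => hypAngle t y z) (sinh x / (sin θ * sinh y * sinh z)) x := by
  have hyz : sinh y * sinh z ≠ 0 := (mul_pos (sinh_pos_iff.2 hy) (sinh_pos_iff.2 hz)).ne'
  have hq : HasDerivAt (fun t => (cosh y * cosh z - cosh t) / (sinh y * sinh z))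
      (-sinh x / (sinh y * sinh z)) x := by
    simpa using ((hasDerivAt_cosh x).const_sub (cosh y * cosh z)).div_const (sinh y * sinh z)
  have hqx : (cosh y * cosh z - cosh x) / (sinh y * sinh z) = cos θ := by
    field_simp
    linarith
  refine (hasDerivAt_arccos_comp_of_eq_cos hq hθ hqx).congr_deriv ?_
  field_simp

theorem hasDerivAt_hypAngle_middle {x y z θ φ : ℝ} (hy : 0 < y) (hz : 0 < z)
    (hθ : θ ∈ Set.Ioo 0 π) (h : cosh x = cosh y * cosh z - sinh y * sinh z * cos θ)
    (hφ : cosh z = cosh x * cosh y - sinh x * sinh y * cos φ) :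
    HasDerivAt (fun t => hypAngle x t z) (-(sinh x / (sin θ * sinh y * sinh z)) * cos φ) y := by
  have hsy : sinh y ≠ 0 := (sinh_pos_iff.2 hy).ne'
  have hsz : sinh z ≠ 0 := (sinh_pos_iff.2 hz).ne'
  have hq : HasDerivAt (fun t => (cosh t * cosh z - cosh x) / (sinh t * sinh z))
      (sinh x * cos φ / (sinh y * sinh z)) y := by
    refine ((((hasDerivAt_cosh y).mul_const (cosh z)).sub_const (cosh x)).div
      ((hasDerivAt_sinh y).mul_const (sinh z)) (mul_ne_zero hsy hsz)).congr_deriv ?_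
    field_simp
    linear_combination (-cosh z) * cosh_sq_sub_sinh_sq y - hφ
  have hqy : (cosh y * cosh z - cosh x) / (sinh y * sinh z) = cos θ := by
    field_simp
    linarith
  refine (hasDerivAt_arccos_comp_of_eq_cos hq hθ hqy).congr_deriv ?_
  field_simp

/-- For a hyperbolic triangle with angles `a_i ∈ (0,π)` determined from the
edge lengths by the hyperbolic cosine law, one has ∂a_i/∂l_i = sinh(l_i)/A where
A = sin(a_i)·sinh(l_j)·sinh(l_k), and ∂a_i/∂l_j = −(∂a_i/∂l_i)·cos(a_k). -/
theorem hyperbolic_deriv_angle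
    (a : (Fin 3 → ℝ) → Fin 3 → ℝ)
    (ha : ∀ x : Fin 3 → ℝ, (∀ i, 0 < x i) →
      (∀ i j k : Fin 3, i ≠ j → j ≠ k → i ≠ k → x i < x j + x k) →
      ∀ i j k : Fin 3, i ≠ j → j ≠ k → i ≠ k →
        a x i ∈ Set.Ioo 0 π ∧
        Real.cosh (x i) = Real.cosh (x j) * Real.cosh (x k) -
          Real.sinh (x j) * Real.sinh (x k) * Real.cos (a x i))
    (l : Fin 3 → ℝ) (hl : ∀ i, 0 < l i)
    (htri : ∀ i j k : Fin 3, i ≠ j → j ≠ k → i ≠ k → l i < l j + l k)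
    (i j k : Fin 3) (hij : i ≠ j) (hjk : j ≠ k) (hik : i ≠ k) :
    HasDerivAt (fun t => a (Function.update l i t) i)
      (Real.sinh (l i) / (Real.sin (a l i) * Real.sinh (l j) * Real.sinh (l k))) (l i) ∧
    HasDerivAt (fun t => a (Function.update l j t) i)
      (-(Real.sinh (l i) / (Real.sin (a l i) * Real.sinh (l j) * Real.sinh (l k)))
        * Real.cos (a l k)) (l j) := by
  have hangle : ∀ x, IsTriangle x → a x i = hypAngle (x i) (x j) (x k) := fun x hx =>
    have hx_law := ha x hx.1 hx.2 i j k hij hjk hik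
    eq_hypAngle_of_cosh_eq (hx.1 j) (hx.1 k) hx_law.1 hx_law.2
  have hl_tri : IsTriangle l := ⟨hl, htri⟩
  obtain ⟨hθ, hlaw_i⟩ := ha l hl htri i j k hij hjk hik
  have hlaw_k := (ha l hl htri k i j hik.symm hij hjk.symm).2
  constructor
  · refine (hasDerivAt_hypAngle_left (hl j) (hl k) hθ hlaw_i).congr_of_eventuallyEq ?_
    filter_upwards [hl_tri.eventually_update i] with t ht
    rw [hangle _ ht, Function.update_self, Function.update_of_ne hij.symm,
      Function.update_of_ne hik.symm]
  · refine (hasDerivAt_hypAngle_middle (hl j) (hl k) hθ hlaw_i hlaw_k).congr_of_eventuallyEq ?_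
    filter_upwards [hl_tri.eventually_update j] with t ht
    rw [hangle _ ht, Function.update_self, Function.update_of_ne hij,
      Function.update_of_ne hjk.symm]
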